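/- arXiv:0801.2953 — 4 statements merged into one kernel-verified Lean document; each statement's English description precedes it below -/
import Mathlib

section
/- Non-resonant linearization mould: if λ ∈ ℂ^ν is non-resonant so that ω(‖n‖) = λ·‖n‖ ≠ 0 for all relevant nonempty words n, then the unique mould Θ with Θ^∅ = 1 solving Θ × I = ∇Θ (where (∇Θ)^n = ω(‖n‖)Θ^n) is given by Θ^{n¹,...,n^r} = 1/(ω₁(ω₁+ω₂)⋯(ω₁+⋯+ω_r)) with ωᵢ = ω(nⁱ). -/
open Classical

/-- The mould product. -/
noncomputable def mouldMul {A : Type*} (M N : List A → ℂ) : List A → ℂ := fun a =>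
  ∑ i ∈ Finset.range (a.length + 1), M (a.take i) * N (a.drop i)

/-- The mould `I`: value 1 on words of length 1, 0 elsewhere. -/
noncomputable def mouldI (A : Type*) : List A → ℂ := fun a =>
  if a.length = 1 then 1 else 0

lemma mouldMul_I {A : Type*} (Θ : List A → ℂ) (w : List A) (hw : w ≠ []) :
    mouldMul Θ (mouldI A) w = Θ w.dropLast := by
  have hlen : 0 < w.length := List.length_pos_iff.mpr hw
  unfold mouldMul mouldI
  rw [Finset.sum_eq_single (w.length - 1)]
  · simp only [List.length_drop]
    have h1 : w.length - (w.length - 1) = 1 := by omega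
    rw [h1, if_pos rfl, mul_one, List.dropLast_eq_take]
  · intro b hb hne
    simp only [Finset.mem_range] at hb
    have : ¬ (w.drop b).length = 1 := by
      simp only [List.length_drop]; omega
    rw [if_neg this, mul_zero]
  · intro h
    exact absurd (Finset.mem_range.mpr (by omega)) h

lemma prod_step {A : Type*} (ω : A → ℂ) (l : List A) (a : A) :
    (∏ k ∈ Finset.range (l ++ [a]).length, (((l ++ [a]).take (k + 1)).map ω).sum)
      = (∏ k ∈ Finset.range l.length, ((l.take (k + 1)).map ω).sum)
        * ((l ++ [a]).map ω).sum := by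
  rw [List.length_append, List.length_singleton, Finset.prod_range_succ]
  congr 1
  · refine Finset.prod_congr rfl fun k hk => ?_
    simp only [Finset.mem_range] at hk
    rw [List.take_append_of_le_length (by omega)]
  · rw [List.take_of_length_le (by simp)]

/-- if `λ` is non-resonant, i.e. `ω(‖n‖) ≠ 0` for every nonempty word `n`
(with `ω` the additive weight of letters), then a mould `Θ` with `Θ^∅ = 1` solves
`Θ × I = ∇Θ` (where `(∇Θ)^n = ω(‖n‖) Θ^n`) iff it is given by
`Θ^{n¹,…,n^r} = 1/(ω₁(ω₁+ω₂)⋯(ω₁+⋯+ω_r))`; in particular such a `Θ` exists and is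
unique. -/
theorem nonresonant_linearization_mould {A : Type*} (ω : A → ℂ)
    (hnr : ∀ w : List A, w ≠ [] → ((w.map ω).sum) ≠ 0) (Θ : List A → ℂ) :
    (Θ [] = 1 ∧ mouldMul Θ (mouldI A) = fun w => ((w.map ω).sum) * Θ w) ↔
      ∀ w : List A,
        Θ w = (∏ k ∈ Finset.range w.length, (((w.take (k + 1)).map ω).sum))⁻¹ := by
  constructor
  · rintro ⟨h0, heq⟩
    intro w
    induction w using List.reverseRecOn with
    | nil => simpa using h0
    | append_singleton l a ih =>
      have hS := hnr (l ++ [a]) (by simp)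
      have hrec : ((l ++ [a]).map ω).sum * Θ (l ++ [a]) = Θ l := by
        have := congrFun heq (l ++ [a])
        rw [mouldMul_I _ _ (by simp), List.dropLast_concat] at this
        exact this.symm
      have : Θ (l ++ [a]) = (((l ++ [a]).map ω).sum)⁻¹ * Θ l := by
        rw [← hrec, ← mul_assoc, inv_mul_cancel₀ hS, one_mul]
      rw [this, ih, prod_step, mul_inv, mul_comm]
  · intro hΘ
    refine ⟨by simpa using hΘ [], ?_⟩
    funext w
    induction w using List.reverseRecOn with
    | nil => simp [mouldMul, mouldI]
    | append_singleton l a _ =>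
      have hS := hnr (l ++ [a]) (by simp)
      rw [mouldMul_I _ _ (by simp), List.dropLast_concat, hΘ l, hΘ (l ++ [a]),
        prod_step, mul_inv, mul_comm _ (((l ++ [a]).map ω).sum)⁻¹, ← mul_assoc,
        mul_inv_cancel₀ hS, one_mul]
end

section
/- The mould Θ^{n¹,...,n^r} = 1/(ω₁(ω₁+ω₂)⋯(ω₁+⋯+ω_r)) (with Θ^∅ = 1, ωᵢ = ω(nⁱ), and all partial sums ω₁+⋯+ω_k nonzero) is symetral: for all words a, b, Σ_{c ∈ a ш b} Θ^c = Θ^a Θ^b, the shuffle counted with multiplicity. -/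
/-- The shuffle product of two words, as a multiset of words (with multiplicity). -/
def shuffle {A : Type*} : List A → List A → Multiset (List A)
  | [], b => {b}
  | x :: a, [] => {x :: a}
  | x :: a, y :: b =>
      (shuffle a (y :: b)).map (x :: ·) + (shuffle (x :: a) b).map (y :: ·)
termination_by a b => a.length + b.length
decreasing_by all_goals simp [List.length_cons]

/-- Symetrality of a complex-valued mould. -/
def Symetral {A : Type*} (M : List A → ℂ) : Prop :=
  ∀ a b : List A, ((shuffle a b).map M).sum = M a * M b


lemma shuffle_nil_left {A : Type*} (b : List A) : shuffle [] b = {b} := by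
  cases b <;> simp [shuffle]

lemma shuffle_nil_right {A : Type*} (a : List A) : shuffle a [] = {a} := by
  cases a <;> simp [shuffle]

theorem shuffle_sum {A : Type*} (ω : A → ℂ) : ∀ (a b : List A), ∀ c ∈ shuffle a b,
    (c.map ω).sum = (a.map ω).sum + (b.map ω).sum
  | [], b => by simp [shuffle_nil_left]
  | x :: a, [] => by simp [shuffle_nil_right]
  | x :: a, y :: b => by
      intro c hc
      rw [show shuffle (x :: a) (y :: b) = (shuffle a (y :: b)).map (x :: ·) +
        (shuffle (x :: a) b).map (y :: ·) from by rw [shuffle]] at hc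
      rcases Multiset.mem_add.1 hc with h | h <;>
        obtain ⟨d, hd, rfl⟩ := Multiset.mem_map.1 h
      · have := shuffle_sum ω a (y :: b) d hd
        simp at this ⊢; rw [this]; ring
      · have := shuffle_sum ω (x :: a) b d hd
        simp at this ⊢; rw [this]; ring
termination_by a b => a.length + b.length
decreasing_by all_goals simp [List.length_cons]

noncomputable def M {A : Type*} (ω : A → ℂ) (w : List A) : ℂ :=
  (∏ k ∈ Finset.range w.length, (((w.take (k + 1)).map ω).sum))⁻¹

lemma M_concat {A : Type*} (ω : A → ℂ) (w : List A) (x : A) :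
    M ω (w ++ [x]) = M ω w * (((w.map ω).sum + ω x))⁻¹ := by
  unfold M
  rw [show (w ++ [x]).length = w.length + 1 by simp, Finset.prod_range_succ, mul_inv]
  congr 1
  · congr 1
    apply Finset.prod_congr rfl
    intro k hk
    rw [List.take_append_of_le_length (by simpa using Finset.mem_range.1 hk)]
  · rw [List.take_of_length_le (by simp)]
    simp

theorem shuffle_concat {A : Type*} : ∀ (u v : List A) (x y : A),
    shuffle (u ++ [x]) (v ++ [y]) =
      (shuffle u (v ++ [y])).map (· ++ [x]) + (shuffle (u ++ [x]) v).map (· ++ [y])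
  | [], [], x, y => by
      simp [shuffle, shuffle_nil_left, shuffle_nil_right, add_comm]
  | [], z :: v, x, y => by
      have ih := shuffle_concat [] v x y
      simp only [List.nil_append, List.cons_append] at *
      simp [shuffle, shuffle_nil_left, ih, Multiset.map_map, Function.comp]
      first | abel | rw [Multiset.cons_swap]
  | w :: u, [], x, y => by
      have ih := shuffle_concat u [] x y
      simp only [List.nil_append, List.cons_append] at *
      simp [shuffle, shuffle_nil_right, ih, Multiset.map_map, Function.comp]
      abel
  | w :: u, z :: v, x, y => by
      have ih1 := shuffle_concat u (z :: v) x y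
      have ih2 := shuffle_concat (w :: u) v x y
      simp only [List.cons_append] at *
      simp [shuffle, ih1, ih2, Multiset.map_map, Function.comp]
      abel
termination_by u v => u.length + v.length
decreasing_by all_goals simp [List.length_cons]

theorem main_aux {A : Type*} (ω : A → ℂ)
    (hnr : ∀ w : List A, w ≠ [] → ((w.map ω).sum) ≠ 0) :
    ∀ n (a b : List A), a.length + b.length ≤ n →
      ((shuffle a b).map (M ω)).sum = M ω a * M ω b := by
  intro n
  induction n with
  | zero =>
    intro a b h
    obtain rfl : a = [] := List.eq_nil_of_length_eq_zero (by omega)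
    obtain rfl : b = [] := List.eq_nil_of_length_eq_zero (by omega)
    simp [shuffle_nil_left, M]
  | succ n ih =>
    intro a b hlen
    rcases List.eq_nil_or_concat a with rfl | ⟨u, x, rfl⟩
    · simp [shuffle_nil_left, M]
    rcases List.eq_nil_or_concat b with rfl | ⟨v, y, rfl⟩
    · simp [shuffle_nil_right, M]
    simp only [List.concat_eq_append] at hlen ⊢
    set Sa := ((u ++ [x]).map ω).sum with hSa
    set Sb := ((v ++ [y]).map ω).sum with hSb
    have hSane : Sa ≠ 0 := hnr _ (by simp)
    have hSbne : Sb ≠ 0 := hnr _ (by simp)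
    have hSne : Sa + Sb ≠ 0 := by
      have := hnr ((u ++ [x]) ++ (v ++ [y])) (by simp)
      rw [List.map_append, List.sum_append] at this
      exact this
    have key1 : ∀ c ∈ shuffle u (v ++ [y]), M ω (c ++ [x]) = M ω c * (Sa + Sb)⁻¹ := by
      intro c hc
      rw [M_concat, shuffle_sum ω u (v ++ [y]) c hc]
      have : (u.map ω).sum + Sb + ω x = Sa + Sb := by
        simp only [hSa, hSb, List.map_append, List.sum_append, List.map_cons,
          List.map_nil, List.sum_cons, List.sum_nil]
        ring
      rw [this]
    have key2 : ∀ c ∈ shuffle (u ++ [x]) v, M ω (c ++ [y]) = M ω c * (Sa + Sb)⁻¹ := by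
      intro c hc
      rw [M_concat, shuffle_sum ω (u ++ [x]) v c hc]
      have : Sa + (v.map ω).sum + ω y = Sa + Sb := by
        simp only [hSa, hSb, List.map_append, List.sum_append, List.map_cons,
          List.map_nil, List.sum_cons, List.sum_nil]
        ring
      rw [this]
    have h1 : ((shuffle u (v ++ [y])).map (fun c => M ω (c ++ [x]))).sum
        = M ω u * M ω (v ++ [y]) * (Sa + Sb)⁻¹ := by
      rw [Multiset.map_congr rfl key1, Multiset.sum_map_mul_right,
        ih u (v ++ [y]) (by simp at hlen ⊢; omega)]
    have h2 : ((shuffle (u ++ [x]) v).map (fun c => M ω (c ++ [y]))).sum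
        = M ω (u ++ [x]) * M ω v * (Sa + Sb)⁻¹ := by
      rw [Multiset.map_congr rfl key2, Multiset.sum_map_mul_right,
        ih (u ++ [x]) v (by simp at hlen ⊢; omega)]
    have hMu : M ω u = M ω (u ++ [x]) * Sa := by
      rw [M_concat ω u x, show (u.map ω).sum + ω x = Sa by
        simp [hSa]]
      field_simp
    have hMv : M ω v = M ω (v ++ [y]) * Sb := by
      rw [M_concat ω v y, show (v.map ω).sum + ω y = Sb by
        simp [hSb]]
      field_simp
    rw [shuffle_concat, Multiset.map_add, Multiset.sum_add, Multiset.map_map,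
      Multiset.map_map, Function.comp_def, Function.comp_def, h1, h2, hMu, hMv]
    field_simp

/-- the linearization mould
`Θ^{n¹,…,n^r} = 1/(ω₁(ω₁+ω₂)⋯(ω₁+⋯+ω_r))` (with `Θ^∅ = 1`, `ωᵢ = ω(nⁱ)`), defined under
the assumption that all the partial sums `ω₁ + ⋯ + ω_k` of every nonempty word are nonzero,
is symetral. -/
theorem linearization_mould_symetral {A : Type*} (ω : A → ℂ)
    (hnr : ∀ w : List A, w ≠ [] → ((w.map ω).sum) ≠ 0) :
    Symetral (fun w =>
      (∏ k ∈ Finset.range w.length, (((w.take (k + 1)).map ω).sum))⁻¹) := by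
  intro a b
  exact main_aux ω hnr (a.length + b.length) a b le_rfl
end

section
/- Stationarity of iterated simplification: let Sam_r denote the r-fold composition Sam ∘ ⋯ ∘ Sam of the simplification mould. Then for every r ≥ 1 and every word n of length at most r, Sam_{r+1}^n = Sam_r^n; consequently for each word n the sequence (Sam_r^n)_{r} is eventually constant and the limit mould Tram^n = Sam_{ℓ(n)}^n is well defined. -/
open Classical

/-- Mould composition over the additive alphabet `Ω ⊂ ℂ`, with `‖a‖ = a₁ + ⋯ + a_r`:
`(M ∘ N)^∅ = M^∅` and `(M ∘ N)^a = Σ_{a¹⋯a^k = a, aⁱ ≠ ∅} M^{‖a¹‖…‖a^k‖} N^{a¹}⋯N^{a^k}`,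
decompositions into nonempty consecutive blocks being indexed by compositions of `ℓ(a)`. -/
noncomputable def mouldComp (M N : List ℂ → ℂ) (a : List ℂ) : ℂ :=
  if a = [] then M []
  else ∑ c : Composition a.length,
    M ((a.splitWrtComposition c).map List.sum) * ((a.splitWrtComposition c).map N).prod

/-- The simplification mould `Sam` (here `ω(n) = n` on the alphabet `Ω ⊂ ℂ`):
`Sam^∅ = 0`; on letters, `Sam^n` is the indicator of `ω(n) = 0`; on a word of length `r ≥ 2`,
if all `ωᵢ ≠ 0`,
`Sam^n = (1/(ω₁⋯ω_r)) Σ_{k=1}^r (−1)^{r−k}(ω_k(r−k) − ω_{k+1} − ⋯ − ω_r)/((k−1)!(r−k+1)!)`;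
if exactly one `ωᵢ = 0`, `Sam^n = (−1)^{r−1}/((i−1)!(r−i)! ω₁⋯ω_{i−1}ω_{i+1}⋯ω_r)`;
if at least two `ωᵢ` vanish, `Sam^n = 0`. -/
noncomputable def Sam (w : List ℂ) : ℂ :=
  if w = [] then 0
  else if w.length = 1 then (if w.getD 0 0 = 0 then 1 else 0)
  else if w.count 0 = 0 then
    (w.prod)⁻¹ * ∑ j ∈ Finset.range w.length,
      (-1 : ℂ) ^ (w.length - 1 - j) *
        (w.getD j 0 * ((w.length - 1 - j : ℕ) : ℂ) - (w.drop (j + 1)).sum) /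
          ((Nat.factorial j : ℂ) * (Nat.factorial (w.length - j) : ℂ))
  else if w.count 0 = 1 then
    (-1 : ℂ) ^ (w.length - 1) /
      ((Nat.factorial (w.idxOf 0) : ℂ) *
        (Nat.factorial (w.length - 1 - w.idxOf 0) : ℂ) * (w.eraseIdx (w.idxOf 0)).prod)
  else 0

/-- `SamPow r = Sam_{r+1}`, the `(r+1)`-fold composition `Sam ∘ ⋯ ∘ Sam`. -/
noncomputable def SamPow : ℕ → List ℂ → ℂ
  | 0 => Sam
  | r + 1 => mouldComp Sam (SamPow r)

open List

theorem splitAux_map {α β : Type*} (f : α → β) :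
    ∀ (ns : List ℕ) (l : List α),
      (l.map f).splitWrtCompositionAux ns = (l.splitWrtCompositionAux ns).map (List.map f)
  | [], l => by simp [List.splitWrtCompositionAux]
  | n :: ns, l => by
      rw [List.splitWrtCompositionAux_cons, List.splitWrtCompositionAux_cons, ← List.map_take,
        ← List.map_drop, splitAux_map f ns, List.map_cons]

theorem splitAux_flatten {α : Type*} :
    ∀ (L : List (List α)) (ns : List ℕ), L.map List.length = ns →
      L.flatten.splitWrtCompositionAux ns = L
  | [], _, h => by subst h; simp [List.splitWrtCompositionAux]
  | l :: L, _, rfl => by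
      simp [List.splitWrtCompositionAux_cons, List.take_left, List.drop_left,
        splitAux_flatten L _ rfl]

theorem splitAux_replicate_one {α : Type*} :
    ∀ (l : List α), l.splitWrtCompositionAux (List.replicate l.length 1) = l.map (fun x => [x])
  | [] => by simp [List.splitWrtCompositionAux]
  | x :: t => by
      simp [List.replicate_succ, List.splitWrtCompositionAux_cons, splitAux_replicate_one t]

theorem flatten_map_flatten {α : Type*} :
    ∀ (G : List (List (List α))), (G.map List.flatten).flatten = G.flatten.flatten
  | [] => rfl
  | g :: G => by simp [flatten_map_flatten G]

theorem mouldComp_nil (M N : List ℂ → ℂ) : mouldComp M N [] = M [] := by simp [mouldComp]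

theorem mouldComp_expand (M N : List ℂ → ℂ) {v : List ℂ} {m : ℕ} (hm : v.length = m)
    (hv : v ≠ []) :
    mouldComp M N v = ∑ b : Composition m,
      M ((v.splitWrtComposition b).map List.sum) * ((v.splitWrtComposition b).map N).prod := by
  subst hm; rw [mouldComp, if_neg hv]

theorem prod_map_fin {α : Type*} (l : List α) {m : ℕ} (hm : l.length = m) (f : α → ℂ) :
    (l.map f).prod = ∏ i : Fin m, f (l[(i : ℕ)]'(by rw [hm]; exact i.2)) := by
  subst hm
  conv_lhs => rw [← List.ofFn_get l, List.map_ofFn, List.prod_ofFn]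
  simp [List.get_eq_getElem]

theorem mouldComp_assoc (M N P : List ℂ → ℂ) (w : List ℂ) :
    mouldComp (mouldComp M N) P w = mouldComp M (mouldComp N P) w := by
  rcases eq_or_ne w [] with rfl | hw
  · simp [mouldComp_nil, mouldComp]
  have hn : 0 < w.length := List.length_pos_iff.2 hw
  rw [mouldComp, if_neg hw, mouldComp, if_neg hw]
  have hsplen : ∀ c : Composition w.length, ∀ i : Fin c.length,
      (i : ℕ) < (w.splitWrtComposition c).length := by
    intro c i; rw [length_splitWrtComposition]; exact i.2
  -- LHS
  have lhs_eq : ∑ c : Composition w.length,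
      mouldComp M N ((w.splitWrtComposition c).map List.sum) *
        ((w.splitWrtComposition c).map P).prod
      = ∑ p : Σ c : Composition w.length, Composition c.length,
          M (((((w.splitWrtComposition p.1).map List.sum).splitWrtComposition p.2)).map List.sum) *
            ((((w.splitWrtComposition p.1).map List.sum).splitWrtComposition p.2).map N).prod *
            ((w.splitWrtComposition p.1).map P).prod := by
    rw [← Finset.univ_sigma_univ, Finset.sum_sigma]
    refine Finset.sum_congr rfl fun c _ => ?_
    rw [mouldComp_expand M N (by simp : ((w.splitWrtComposition c).map List.sum).length = c.length)
        (by
          have : 0 < ((w.splitWrtComposition c).map List.sum).length := by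
            simp [c.length_pos_of_pos hn]
          exact List.length_pos_iff.1 this),
      Finset.sum_mul]
  -- RHS
  have rhs_eq : ∑ c : Composition w.length,
      M ((w.splitWrtComposition c).map List.sum) *
        ((w.splitWrtComposition c).map (mouldComp N P)).prod
      = ∑ p : Σ c : Composition w.length, ∀ i : Fin c.length, Composition (c.blocksFun i),
          M ((w.splitWrtComposition p.1).map List.sum) *
            ∏ i : Fin p.1.length,
              (N (((((w.splitWrtComposition p.1)[(i : ℕ)]'(hsplen p.1 i)).splitWrtComposition
                    (p.2 i))).map List.sum) *
                ((((w.splitWrtComposition p.1)[(i : ℕ)]'(hsplen p.1 i)).splitWrtComposition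
                    (p.2 i)).map P).prod) := by
    rw [← Finset.univ_sigma_univ, Finset.sum_sigma]
    refine Finset.sum_congr rfl fun c _ => ?_
    have hblock : ∀ i : Fin c.length,
        ((w.splitWrtComposition c)[(i : ℕ)]'(hsplen c i)).length = c.blocksFun i := by
      intro i
      have h1 := map_length_splitWrtComposition w c
      have : ((w.splitWrtComposition c).map List.length)[(i : ℕ)]'(by
          simpa using hsplen c i) = c.blocks[(i : ℕ)]'(by
          have := i.2; simpa [Composition.length] using this) := by
        simp_rw [h1]
      simpa [Composition.blocksFun, List.getElem_map] using this
    rw [prod_map_fin (w.splitWrtComposition c) (length_splitWrtComposition w c) (mouldComp N P)]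
    have : ∀ i : Fin c.length,
        mouldComp N P ((w.splitWrtComposition c)[(i : ℕ)]'(hsplen c i))
        = ∑ d : Composition (c.blocksFun i),
            N ((((w.splitWrtComposition c)[(i : ℕ)]'(hsplen c i)).splitWrtComposition d).map
                List.sum) *
              ((((w.splitWrtComposition c)[(i : ℕ)]'(hsplen c i)).splitWrtComposition d).map
                P).prod := by
      intro i
      refine mouldComp_expand N P (hblock i) ?_
      have : 0 < ((w.splitWrtComposition c)[(i : ℕ)]'(hsplen c i)).length := by
        rw [hblock i]; exact c.one_le_blocksFun i
      exact List.length_pos_iff.1 this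
    simp_rw [this]
    rw [Finset.prod_univ_sum, Fintype.piFinset_univ, Finset.mul_sum]
  rw [lhs_eq, rhs_eq, ← Equiv.sum_comp (Composition.sigmaEquivSigmaPi w.length)]
  refine Finset.sum_congr rfl fun p _ => ?_
  obtain ⟨c, b⟩ := p
  dsimp [Composition.sigmaEquivSigmaPi]
  set L := w.splitWrtComposition c with hLdef
  set Gr := L.splitWrtComposition b with hGrdef
  have hGr_len : Gr.length = (c.gather b).length := by
    rw [Composition.length_gather]; exact length_splitWrtComposition _ _
  have hL : L.map List.length = c.blocks := map_length_splitWrtComposition w c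
  have hGrflat : Gr.flatten = L := by
    apply List.flatten_splitWrtCompositionAux
    rw [b.blocks_sum]; exact (length_splitWrtComposition w c).symm
  have hGall : (L.map List.sum).splitWrtComposition b = Gr.map (List.map List.sum) :=
    splitAux_map List.sum b.blocks L
  have hgather : w.splitWrtComposition (c.gather b) = Gr.map List.flatten := by
    have h1 : (Gr.map List.flatten).flatten = w := by
      rw [flatten_map_flatten, hGrflat, flatten_splitWrtComposition]
    have h2 : (Gr.map List.flatten).map List.length = (c.gather b).blocks := by
      show _ = (c.blocks.splitWrtComposition b).map List.sum
      rw [← hL]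
      rw [show (L.map List.length).splitWrtComposition b = Gr.map (List.map List.length) from
        splitAux_map List.length b.blocks L]
      rw [List.map_map, List.map_map]
      exact List.map_congr_left fun g _ => by simp [List.sum_flatten]
    show w.splitWrtCompositionAux (c.gather b).blocks = Gr.map List.flatten
    rw [← splitAux_flatten (Gr.map List.flatten) (c.gather b).blocks h2, h1]
  have hsplit_i : ∀ i : Fin (c.gather b).length,
      ((w.splitWrtComposition (c.gather b))[(i : ℕ)]'(hsplen _ i)).splitWrtComposition
        (c.sigmaCompositionAux b i) = Gr[(i : ℕ)]'(by rw [hGr_len]; exact i.2) := by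
    intro i
    have hgi : (w.splitWrtComposition (c.gather b))[(i : ℕ)]'(hsplen _ i)
        = (Gr[(i : ℕ)]'(by rw [hGr_len]; exact i.2)).flatten := by
      rw [List.getElem_of_eq hgather, List.getElem_map]
    have hdb : (c.sigmaCompositionAux b i).blocks
        = (Gr[(i : ℕ)]'(by rw [hGr_len]; exact i.2)).map List.length := by
      have e1 : c.blocks.splitWrtComposition b = Gr.map (List.map List.length) := by
        rw [← hL]; exact splitAux_map List.length b.blocks L
      show (c.blocks.splitWrtComposition b)[(i : ℕ)]'(by
        rw [length_splitWrtComposition, ← Composition.length_gather c b]; exact i.2) = _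
      rw [List.getElem_of_eq e1, List.getElem_map]
    rw [hgi]
    show List.splitWrtCompositionAux _ (c.sigmaCompositionAux b i).blocks = _
    rw [hdb]
    exact splitAux_flatten _ _ rfl
  have hNprod : ∏ i : Fin (c.gather b).length,
      (N ((((w.splitWrtComposition (c.gather b))[(i : ℕ)]'(hsplen _ i)).splitWrtComposition
            (c.sigmaCompositionAux b i)).map List.sum) *
        ((((w.splitWrtComposition (c.gather b))[(i : ℕ)]'(hsplen _ i)).splitWrtComposition
            (c.sigmaCompositionAux b i)).map P).prod)
      = (Gr.map (fun g => N (g.map List.sum) * (g.map P).prod)).prod := by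
    rw [prod_map_fin Gr hGr_len (fun g => N (g.map List.sum) * (g.map P).prod)]
    exact Finset.prod_congr rfl fun i _ => by rw [hsplit_i i]
  erw [hNprod]; rw [List.prod_map_mul, hGall, hgather]
  have hM : ((Gr.map (List.map List.sum)).map List.sum) = ((Gr.map List.flatten).map List.sum) := by
    rw [List.map_map, List.map_map]
    exact (List.map_congr_left fun g _ => by simp [List.sum_flatten]).symm
  have hN : (Gr.map (List.map List.sum)).map N = Gr.map (fun g => N (g.map List.sum)) := by
    rw [List.map_map]; rfl
  have hP : (Gr.map fun g => ((g.map P).prod)).prod = (L.map P).prod := by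
    rw [show (Gr.map fun g => ((g.map P).prod)) = (Gr.map (List.map P)).map List.prod by
      rw [List.map_map]; rfl]
    rw [← List.prod_flatten, ← List.map_flatten, hGrflat]
  rw [hM, hN, hP]
  ring

theorem Sam_nil : Sam [] = 0 := by simp [Sam]

theorem Sam_singleton (x : ℂ) : Sam [x] = if x = 0 then 1 else 0 := by
  simp [Sam]

theorem Sam_replicate_zero {m : ℕ} (hm : 2 ≤ m) : Sam (List.replicate m 0) = 0 := by
  have h0 : (List.replicate m (0 : ℂ)) ≠ [] := by
    simp [List.replicate_eq_nil_iff]; omega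
  have h1 : (List.replicate m (0 : ℂ)).length = m := List.length_replicate
  have h2 : (List.replicate m (0 : ℂ)).count 0 = m := by simp
  rw [Sam, if_neg h0, if_neg (by rw [h1]; omega), h2, if_neg (by omega), if_neg (by omega)]

theorem SamPow_nil (q : ℕ) : SamPow q [] = 0 := by
  cases q with
  | zero => exact Sam_nil
  | succ q => show mouldComp Sam (SamPow q) [] = 0; rw [mouldComp_nil, Sam_nil]

theorem samPow_succ : ∀ r : ℕ, SamPow (r + 1) = mouldComp (SamPow r) Sam := by
  intro r
  induction r with
  | zero => rfl
  | succ r ih =>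
      funext w
      show mouldComp Sam (SamPow (r + 1)) w = mouldComp (SamPow (r + 1)) Sam w
      calc mouldComp Sam (SamPow (r + 1)) w
          = mouldComp Sam (mouldComp (SamPow r) Sam) w := by rw [ih]
        _ = mouldComp (mouldComp Sam (SamPow r)) Sam w := (mouldComp_assoc _ _ _ w).symm
        _ = mouldComp (SamPow (r + 1)) Sam w := rfl

theorem SamPow_replicate_zero : ∀ (q : ℕ) {m : ℕ}, 2 ≤ m →
    SamPow q (List.replicate m 0) = 0 := by
  intro q
  induction q with
  | zero => exact fun hm => Sam_replicate_zero hm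
  | succ q ih =>
      intro m hm
      set w : List ℂ := List.replicate m 0 with hwdef
      have hw : w ≠ [] := by simp [hwdef, List.replicate_eq_nil_iff]; omega
      have hwl : w.length = m := List.length_replicate
      show mouldComp Sam (SamPow q) w = 0
      rw [mouldComp, if_neg hw]
      apply Finset.sum_eq_zero
      intro c _
      have hmem : ∀ x ∈ w, x = (0 : ℂ) := fun x hx => List.eq_of_mem_replicate hx
      have hVc : (w.splitWrtComposition c).map List.sum = List.replicate c.length 0 := by
        rw [List.eq_replicate_iff]
        refine ⟨by simp, ?_⟩
        intro s hs
        simp only [List.mem_map] at hs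
        obtain ⟨v, hv, rfl⟩ := hs
        apply List.sum_eq_zero
        intro x hx
        apply hmem
        rw [← List.flatten_splitWrtComposition w c]
        exact List.mem_flatten_of_mem hv hx
      rcases eq_or_lt_of_le (Nat.succ_le_of_lt (c.length_pos_of_pos (by omega : 0 < w.length))) with h1 | h2
      · -- single block
        obtain ⟨a, ha⟩ := List.length_eq_one_iff.1 (show c.blocks.length = 1 from h1.symm)
        have hab : a = m := by
          have hbs := c.blocks_sum
          rw [ha] at hbs
          simpa [hwl] using hbs
        have hsplit : w.splitWrtComposition c = [w] := by
          show w.splitWrtCompositionAux c.blocks = [w]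
          rw [ha, hab]
          simp [List.splitWrtCompositionAux_cons, List.splitWrtCompositionAux, ← hwl]
        rw [hsplit]
        simp [hwdef, ih hm]
      · rw [hVc, Sam_replicate_zero (by omega), zero_mul]

theorem main_P : ∀ r : ℕ, 1 ≤ r → ∀ w : List ℂ, w.length ≤ r →
    SamPow r w = SamPow (r - 1) w := by
  intro r
  induction r with
  | zero => exact fun h => absurd h (by omega)
  | succ r ih =>
    intro _ w hwlen
    rcases eq_or_ne w [] with rfl | hw
    · rw [SamPow_nil, SamPow_nil]
    simp only [Nat.add_sub_cancel]
    cases Nat.eq_zero_or_pos r with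
    | inl hr0 =>
      subst hr0
      obtain ⟨x, rfl⟩ := List.length_eq_one_iff.1 (show w.length = 1 by have := List.length_pos_iff.2 hw; omega)
      show mouldComp Sam Sam [x] = Sam [x]
      rw [mouldComp, if_neg (by simp)]
      rw [Finset.sum_eq_single (Composition.ones ([x] : List ℂ).length)]
      · have hsp : ([x] : List ℂ).splitWrtComposition (Composition.ones ([x] : List ℂ).length)
            = [[x]] := splitAux_replicate_one [x]
        rw [hsp]
        rcases eq_or_ne x 0 with rfl | hx
        · simp [Sam_singleton]
        · simp [Sam_singleton, hx]
      · intro b _ hbne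
        refine absurd (Composition.eq_ones_iff_length.2 ?_) hbne
        have hx1 : ([x] : List ℂ).length = 1 := rfl
        have h2 := b.length_le
        have h3 := b.length_pos_of_pos (by simp : 0 < ([x] : List ℂ).length)
        omega
      · intro h; exact absurd (Finset.mem_univ _) h
    | inr hr1 =>
      have h1 : SamPow (r + 1) = mouldComp (SamPow r) Sam := samPow_succ r
      have h2 : SamPow r = mouldComp (SamPow (r - 1)) Sam := by
        conv_lhs => rw [show r = (r - 1) + 1 by omega]
        exact samPow_succ (r - 1)
      rw [h1]
      conv_rhs => rw [h2]
      rw [mouldComp, if_neg hw, mouldComp, if_neg hw]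
      apply Finset.sum_congr rfl
      intro c _
      rcases le_or_gt c.length r with hcr | hcr
      · congr 1
        exact ih hr1 _ (by simp [hcr])
      · have hcl : c.length = r + 1 := le_antisymm (c.length_le.trans hwlen) hcr
        have hwl : w.length = r + 1 := le_antisymm hwlen (hcl ▸ c.length_le)
        have hc : c = Composition.ones w.length :=
          Composition.eq_ones_iff_length.2 (by omega)
        subst hc
        have hsp : w.splitWrtComposition (Composition.ones w.length)
            = w.map (fun x => [x]) := splitAux_replicate_one w
        rw [hsp]
        by_cases hz : ∀ x ∈ w, x = (0 : ℂ)
        · have hwrep : w = List.replicate (r + 1) 0 :=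
            List.eq_replicate_iff.2 ⟨hwl, hz⟩
          have hVc : (w.map (fun x => [x])).map List.sum = w := by
            have hcmp : (List.sum ∘ fun x : ℂ => [x]) = id := by funext x; simp
            rw [List.map_map, hcmp, List.map_id]
          rw [hVc, hwrep, SamPow_replicate_zero r (by omega),
            SamPow_replicate_zero (r - 1) (by omega), zero_mul]
        · push_neg at hz
          obtain ⟨x, hxw, hx0⟩ := hz
          have hzero : (0 : ℂ) ∈ (w.map (fun x => [x])).map Sam := by
            simp only [List.map_map, List.mem_map]
            exact ⟨x, hxw, by simp [Function.comp, Sam_singleton, hx0]⟩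
          rw [List.prod_eq_zero hzero, mul_zero, mul_zero]

/-- stationarity of iterated simplification: for every `r ≥ 1` and every word
`n` of length at most `r`, `Sam_{r+1}^n = Sam_r^n`; consequently for each word the sequence
`(Sam_q^n)_q` is eventually constant, with limit `Tram^n = Sam_{ℓ(n)}^n`. -/
theorem samPow_stationary :
    (∀ r : ℕ, 1 ≤ r → ∀ w : List ℂ, w.length ≤ r → SamPow r w = SamPow (r - 1) w) ∧
    (∀ (w : List ℂ) (q : ℕ), w.length ≤ q + 1 → SamPow q w = SamPow (w.length - 1) w) := by
  refine ⟨main_P, ?_⟩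
  intro w q hq
  induction q with
  | zero =>
      have h0 : w.length - 1 = 0 := by omega
      rw [h0]
  | succ q ih =>
      rcases le_or_gt w.length (q + 1) with h | h
      · have hstep := main_P (q + 1) (by omega) w h
        simp only [Nat.add_sub_cancel] at hstep
        exact hstep.trans (ih h)
      · have h1 : w.length - 1 = q + 1 := by omega
        rw [h1]
end

section
/- The trimmed mould kills non-resonant words: with Tram = lim_r Sam^{∘r} (stationary limit), one has Tram^∅ = 0 and Tram^n = 0 for every word n with ω(‖n‖) ≠ 0. In particular the trimmed form X_tram = X_lin + Σ_n Tram^n B_n contains only resonant words, hence commutes with X_lin. -/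
open Classical

/-- The trimmed mould `Tram`, the stationary limit of the iterated simplifications:
on a word `w` it equals `Sam_q^w` for any `q ≥ ℓ(w)`. -/
noncomputable def Tram (w : List ℂ) : ℂ := SamPow w.length w

lemma sam_single (x : ℂ) (hx : x ≠ 0) : Sam [x] = 0 := by
  simp [Sam, hx]

lemma samPow_eq_zero : ∀ r : ℕ, ∀ w : List ℂ, w.length ≤ r + 1 → w.sum ≠ 0 → SamPow r w = 0 := by
  intro r
  induction r with
  | zero =>
    intro w hlen hsum
    have hne : w ≠ [] := by rintro rfl; simp at hsum
    have h1 : w.length = 1 :=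
      le_antisymm hlen (Nat.one_le_iff_ne_zero.mpr (by simpa using hne))
    obtain ⟨x, rfl⟩ := List.length_eq_one_iff.mp h1
    simp only [List.sum_cons, List.sum_nil, add_zero] at hsum
    simpa [SamPow] using sam_single x hsum
  | succ r ih =>
    intro w hlen hsum
    have hne : w ≠ [] := by rintro rfl; simp at hsum
    have hwpos : 0 < w.length := List.length_pos_iff.mpr hne
    show mouldComp Sam (SamPow r) w = 0
    rw [mouldComp, if_neg hne]
    apply Finset.sum_eq_zero
    intro c _
    set L := w.splitWrtComposition c with hL
    have hjoin : L.flatten = w := List.flatten_splitWrtComposition _ _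
    have hmaplen : L.map List.length = c.blocks := List.map_length_splitWrtComposition _ _
    have hLlen : L.length = c.blocks.length := by rw [← hmaplen, List.length_map]
    have hsum' : (L.map List.sum).sum = w.sum := by
      conv_rhs => rw [← hjoin]
      rw [List.sum_flatten]
    have hblocksum : c.blocks.sum = w.length := c.blocks_sum
    have hklen0 : c.blocks.length ≠ 0 := by
      intro h
      rw [List.length_eq_zero_iff.mp h] at hblocksum
      simp at hblocksum
      omega
    by_cases hk : c.blocks.length = 1
    · have hmap1 : L.map List.sum = [w.sum] := by
        have hlen1 : (L.map List.sum).length = 1 := by simp [hLlen, hk]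
        obtain ⟨x, hx⟩ := List.length_eq_one_iff.mp hlen1
        rw [hx] at hsum' ⊢
        simp only [List.sum_cons, List.sum_nil, add_zero] at hsum'
        rw [hsum']
      rw [hmap1, sam_single _ hsum, zero_mul]
    · have hex : ∃ b ∈ L, b.sum ≠ 0 := by
        by_contra h
        push_neg at h
        apply hsum
        rw [← hsum']
        apply List.sum_eq_zero
        intro x hx
        obtain ⟨b, hb, rfl⟩ := List.mem_map.mp hx
        exact h b hb
      obtain ⟨b, hbL, hbsum⟩ := hex
      have hbl : b.length ∈ c.blocks := by
        rw [← hmaplen]; exact List.mem_map_of_mem hbL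
      have hzero : SamPow r b = 0 := by
        apply ih _ _ hbsum
        have hperm : c.blocks.sum = b.length + (c.blocks.erase b.length).sum := by
          rw [(List.perm_cons_erase hbl).sum_eq]; simp
        have herlen : (c.blocks.erase b.length).length = c.blocks.length - 1 :=
          List.length_erase_of_mem hbl
        have herne : (c.blocks.erase b.length) ≠ [] := by
          intro h
          rw [h] at herlen
          simp at herlen
          omega
        obtain ⟨y, hy⟩ := List.exists_mem_of_ne_nil _ herne
        have hy1 : 1 ≤ y := c.blocks_pos (List.mem_of_mem_erase hy)
        have hysum : y ≤ (c.blocks.erase b.length).sum :=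
          List.single_le_sum (fun x _ => Nat.zero_le x) _ hy
        omega
      have hmem0 : (0 : ℂ) ∈ L.map (SamPow r) := by
        rw [← hzero]; exact List.mem_map_of_mem hbL
      rw [List.prod_eq_zero hmem0, mul_zero]

/-- the trimmed mould kills non-resonant words: `Tram^∅ = 0` and `Tram^n = 0`
whenever `ω(‖n‖) = n¹ + ⋯ + n^r ≠ 0`; hence the trimmed form contains only resonant
words. -/
theorem tram_kills_nonresonant :
    Tram [] = 0 ∧ ∀ w : List ℂ, w.sum ≠ 0 → Tram w = 0 := by
  constructor
  · simp [Tram, SamPow, Sam]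
  · intro w hw
    exact samPow_eq_zero w.length w (by omega) hw
end
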